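/- Let A and B be commutative rings with unity, f : A → B a ring homomorphism, and J an ideal of B. For every ideal 𝔞 of A, one has the inequality kgr_{A⋈^f J}(𝔞^e, A⋈^f J) ≤ min{ kgr_A(𝔞, A), kgr_A(𝔞, J) }, where 𝔞^e = 𝔞(A⋈^f J). -/

import Mathlib

/-- The Koszul cochain differential of the complex `Hom(K_•(x), M)`, described explicitly:
the degree-`i` term is the module of `M`-valued functions on the `i`-element subsets of
`Fin n`, and the differential is the usual alternating-sum formula. -/
noncomputable def koszulMap (A : Type*) [CommRing A] (M : Type*) [AddCommGroup M]
    [Module A M] {n : ℕ} (x : Fin n → A) (i : ℕ) :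
    ({s : Finset (Fin n) // s.card = i} → M) →ₗ[A]
      ({s : Finset (Fin n) // s.card = i + 1} → M) where
  toFun g t := ∑ j ∈ t.1.attach,
    (((-1 : A) ^ ((t.1.filter (fun k => k < j.1)).card)) * x j.1) •
      g ⟨t.1.erase j.1, by
        rw [Finset.card_erase_of_mem j.2, t.2]; omega⟩

  map_add' g h := funext fun t => by
    simp [smul_add, Finset.sum_add_distrib]
  map_smul' a g := funext fun t => by
    simp only [Pi.smul_apply, RingHom.id_apply, Finset.smul_sum]
    exact Finset.sum_congr rfl fun j _ => by
      rw [smul_smul, smul_smul, mul_comm]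

/-- Nonvanishing of the `i`-th cohomology `H^i(Hom(K_•(x), M))` of the Koszul
cochain complex. -/
def koszulCohomologyNeZero (A : Type*) [CommRing A] (M : Type*) [AddCommGroup M]
    [Module A M] {n : ℕ} (x : Fin n → A) : ℕ → Prop
  | 0 => LinearMap.ker (koszulMap A M x 0) ≠ ⊥
  | (i + 1) => ¬ (LinearMap.ker (koszulMap A M x (i + 1)) ≤
      LinearMap.range (koszulMap A M x i))

/-- The Koszul grade of a finite sequence `x` on `M`:
`inf { i : H^i(Hom(K_•(x), M)) ≠ 0 }` (an element of `ℕ∞`, equal to `⊤` if all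
cohomology vanishes). -/
noncomputable def kgrSeq (A : Type*) [CommRing A] (M : Type*) [AddCommGroup M]
    [Module A M] {n : ℕ} (x : Fin n → A) : ℕ∞ :=
  sInf {i : ℕ∞ | ∃ k : ℕ, i = k ∧ koszulCohomologyNeZero A M x k}

/-- The Koszul grade `kgr_A(𝔞, M)` of an arbitrary ideal `𝔞` on `M`: the supremum of the
Koszul grades of finite sequences contained in `𝔞` (equivalently, of the finitely
generated subideals of `𝔞`). -/
noncomputable def kgr (A : Type*) [CommRing A] (𝔞 : Ideal A) (M : Type*)
    [AddCommGroup M] [Module A M] : ℕ∞ :=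
  ⨆ (n : ℕ) (x : Fin n → A) (_ : ∀ j, x j ∈ 𝔞), kgrSeq A M x

/-- The height of an ideal: the infimum of the heights of the primes containing it. -/
noncomputable def idealHeight (A : Type*) [CommRing A] (𝔞 : Ideal A) : ℕ∞ :=
  ⨅ (p : PrimeSpectrum A) (_ : 𝔞 ≤ p.asIdeal), Order.height p

/-- A commutative ring `R` is Cohen-Macaulay in the sense of a class `𝒜` of ideals if
`height 𝔞 = kgr_R(𝔞, R)` for every `𝔞 ∈ 𝒜`. -/
def IsCMSense (R : Type*) [CommRing R] (𝒜 : Set (Ideal R)) : Prop :=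
  ∀ 𝔞 ∈ 𝒜, idealHeight R 𝔞 = kgr R 𝔞 R

/-- Cohen-Macaulay in the sense of ideals. -/
def IsCMIdeals (R : Type*) [CommRing R] : Prop :=
  ∀ 𝔞 : Ideal R, idealHeight R 𝔞 = kgr R 𝔞 R

/-- Cohen-Macaulay in the sense of maximal ideals. -/
def IsCMMaximal (R : Type*) [CommRing R] : Prop :=
  ∀ 𝔪 : Ideal R, 𝔪.IsMaximal → idealHeight R 𝔪 = kgr R 𝔪 R

/-- The amalgamation `A ⋈^f J = {(a, f a + j) : a ∈ A, j ∈ J}` of `A` with `B` along the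
ideal `J` of `B` with respect to `f : A →+* B`, as a subring of `A × B`. -/
def amalgamation {A B : Type*} [CommRing A] [CommRing B] (f : A →+* B) (J : Ideal B) :
    Subring (A × B) where
  carrier := {p | p.2 - f p.1 ∈ J}
  zero_mem' := by simp
  one_mem' := by simp
  add_mem' := fun {p q} hp hq => by
    have := J.add_mem hp hq
    simpa [add_sub_add_comm] using this
  neg_mem' := fun {p} hp => by
    show (-p).2 - f ((-p).1) ∈ J
    have key : (-p).2 - f ((-p).1) = -(p.2 - f p.1) := by
      simp only [Prod.fst_neg, Prod.snd_neg, map_neg]; ring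
    rw [key]
    exact J.neg_mem hp
  mul_mem' := fun {p q} hp hq => by
    show (p * q).2 - f ((p * q).1) ∈ J
    have key : (p * q).2 - f ((p * q).1)
        = p.2 * (q.2 - f q.1) + (p.2 - f p.1) * f q.1 := by
      simp only [Prod.fst_mul, Prod.snd_mul, map_mul]; ring
    rw [key]
    exact J.add_mem (J.mul_mem_left _ hq) (J.mul_mem_right _ hp)

/-- The natural embedding `ι_A : A → A ⋈^f J`, `a ↦ (a, f a)`. -/
def amalgIota {A B : Type*} [CommRing A] [CommRing B] (f : A →+* B) (J : Ideal B) :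
    A →+* amalgamation f J where
  toFun a := ⟨(a, f a), show (a, f a).2 - f (a, f a).1 ∈ J by simp⟩
  map_one' := Subtype.ext (by simp)
  map_mul' a b := Subtype.ext (by simp)
  map_zero' := Subtype.ext (by simp)
  map_add' a b := Subtype.ext (by simp)

/-- The extension `𝔞^e = 𝔞(A ⋈^f J)` of an ideal `𝔞` of `A` along `ι_A`. -/
noncomputable def idealExt {A B : Type*} [CommRing A] [CommRing B] (f : A →+* B)
    (J : Ideal B) (𝔞 : Ideal A) : Ideal ↥(amalgamation f J) :=
  Ideal.map (amalgIota f J) 𝔞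

/-- `kgr_A(𝔞, J)` where the ideal `J` of `B` is viewed as an `A`-module via `f`. -/
noncomputable def kgrIdeal {A B : Type*} [CommRing A] [CommRing B] (f : A →+* B)
    (J : Ideal B) (𝔞 : Ideal A) : ℕ∞ :=
  letI : Module A J := Module.compHom J f
  kgr A 𝔞 J

/-- The ideal `𝔭'^f = 𝔭 ⋈^f J = {(p, f p + j) : p ∈ 𝔭, j ∈ J}` of `A ⋈^f J`. -/
def primeAmalg {A B : Type*} [CommRing A] [CommRing B] (f : A →+* B) (J : Ideal B)
    (𝔭 : Ideal A) : Ideal ↥(amalgamation f J) where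
  carrier := {z | (z : A × B).1 ∈ 𝔭}
  zero_mem' := by simp
  add_mem' := fun {a b} ha hb => 𝔭.add_mem ha hb
  smul_mem' := fun c {z} hz => 𝔭.mul_mem_left (c : A × B).1 hz

/-- The ideal `𝔮̄^f = {(a, f a + j) : a ∈ A, j ∈ J, f a + j ∈ 𝔮}` of `A ⋈^f J`. -/
def qbarAmalg {A B : Type*} [CommRing A] [CommRing B] (f : A →+* B) (J : Ideal B)
    (𝔮 : Ideal B) : Ideal ↥(amalgamation f J) where
  carrier := {z | (z : A × B).2 ∈ 𝔮}
  zero_mem' := by simp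
  add_mem' := fun {a b} ha hb => 𝔮.add_mem ha hb
  smul_mem' := fun c {z} hz => 𝔮.mul_mem_left (c : A × B).2 hz

/-- A ring homomorphism `f : A →+* B` satisfies the going-down property. -/
def RingHom.GoesDown {A B : Type*} [CommRing A] [CommRing B] (f : A →+* B) : Prop :=
  ∀ (𝔭' 𝔭 : Ideal A), 𝔭'.IsPrime → 𝔭.IsPrime → 𝔭' ≤ 𝔭 →
    ∀ 𝔮 : Ideal B, 𝔮.IsPrime → 𝔮.comap f = 𝔭 →
      ∃ 𝔮' : Ideal B, 𝔮'.IsPrime ∧ 𝔮' ≤ 𝔮 ∧ 𝔮'.comap f = 𝔭'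

/-!
A finite sequence `y` in `𝔞^e` lies in the ideal generated by `ι(a)` for a finite sequence `a`
in `𝔞`. Koszul grade is monotone under inclusion of the generated ideals:
`kgr(y) ≤ kgr(u, y) = kgr(y, u) ≤ kgr(u)` when every `yᵢ ∈ (u)`. Prepending an element cannot
lower the grade (long exact sequence of the mapping cone `K(z, x) = cone(z : K(x) → K(x))`),
prepending an element of `(x)` cannot raise it (multiplication by `xₘ` is null-homotopic on
`K(x)` via contraction against `eₘ`), and permuting the sequence does not change it. Finally,
`(a, j) ↦ (a, f a + j)` is a bijection `A × J → A ⋈^f J`, semilinear along `ι`, so the grade of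
`ι(a)` on `A ⋈^f J` is the grade of `a` on `A × J`, the minimum of the grades on `A` and on `J`.
-/

open Finset

lemma card_filter_eq_add_of_iff {α : Type*} [DecidableEq α] {s : Finset α} {p q r : α → Prop}
    [DecidablePred p] [DecidablePred q] [DecidablePred r] (hpqr : ∀ a, p a ↔ q a ∨ r a)
    (hqr : ∀ a, q a → ¬ r a) :
    #(s.filter p) = #(s.filter q) + #(s.filter r) := by
  rw [filter_congr fun a _ => hpqr a, filter_or,
    card_union_of_disjoint (disjoint_filter.2 fun a _ => hqr a)]

section Combinatorics

variable {α : Type*} [LinearOrder α]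

lemma card_filter_lt_erase_add_one {m j : α} {t : Finset α} (hm : m ∉ t) (hj : j ∈ t) :
    #(t.filter (· < j)) + #((t.erase j).filter (· < m)) + 1 =
      #(t.filter (· < m)) + #((insert m t).filter (· < j)) := by
  rw [filter_erase, filter_insert]
  rcases lt_or_gt_of_ne (ne_of_mem_of_not_mem hj hm) with hjm | hmj
  · have hjf : j ∈ t.filter (· < m) := mem_filter.2 ⟨hj, hjm⟩
    rw [card_erase_of_mem hjf, if_neg (lt_asymm hjm)]
    have := card_pos.2 ⟨j, hjf⟩
    omega
  · have hjf : j ∉ t.filter (· < m) := fun h => lt_asymm hmj (mem_filter.1 h).2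
    have hmf : m ∉ t.filter (· < j) := fun h => hm (mem_filter.1 h).1
    rw [erase_eq_of_notMem hjf, if_pos hmj, card_insert_of_notMem hmf]
    omega

variable {β : Type*} [LinearOrder β]

def inversions (e : α ≃ β) (s : Finset α) : ℕ :=
  ∑ b ∈ s, #(s.filter fun a => a < b ∧ e b < e a)

lemma inversions_eq_inversions_erase_add (e : α ≃ β) {t : Finset α} {j : α} (hj : j ∈ t) :
    inversions e t = inversions e (t.erase j) + #(t.filter fun a => a < j ∧ e j < e a) +
      #(t.filter fun a => j < a ∧ e a < e j) := by
  have hterm (b : α) : #(t.filter fun a => a < b ∧ e b < e a) =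
      #((t.erase j).filter fun a => a < b ∧ e b < e a) + if j < b ∧ e b < e j then 1 else 0 := by
    rw [filter_erase]
    split_ifs with hb
    · exact (card_erase_add_one (mem_filter.2 ⟨hj, hb⟩)).symm
    · have hjb : j ∉ t.filter fun a => a < b ∧ e b < e a := fun h => hb (mem_filter.1 h).2
      rw [erase_eq_of_notMem hjb, add_zero]
  have hj' : j ∉ t.filter fun a => j < a ∧ e a < e j := fun h => lt_irrefl j (mem_filter.1 h).2.1
  rw [inversions, inversions, ← add_sum_erase t _ hj, sum_congr rfl fun b _ => hterm b,
    sum_add_distrib, ← card_filter, filter_erase, erase_eq_of_notMem hj']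
  ring

lemma inversions_add_card_filter (e : α ≃ β) {t : Finset α} {j : α} (hj : j ∈ t) :
    inversions e t + #(t.filter fun a => e a < e j) =
      inversions e (t.erase j) + #(t.filter (· < j)) +
        2 * #(t.filter fun a => j < a ∧ e a < e j) := by
  have h₁ : #(t.filter (· < j)) = #(t.filter fun a => a < j ∧ e a < e j) +
      #(t.filter fun a => a < j ∧ e j < e a) :=
    card_filter_eq_add_of_iff (fun a => ⟨fun ha => (lt_or_gt_of_ne (e.injective.ne ha.ne)).imp
      (⟨ha, ·⟩) (⟨ha, ·⟩), by rintro (h | h) <;> exact h.1⟩) fun a h h' => lt_asymm h.2 h'.2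
  have h₂ : #(t.filter fun a => e a < e j) = #(t.filter fun a => a < j ∧ e a < e j) +
      #(t.filter fun a => j < a ∧ e a < e j) :=
    card_filter_eq_add_of_iff (fun a => ⟨fun ha => (lt_or_gt_of_ne
      (fun h => ha.ne (congrArg e h))).imp (⟨·, ha⟩) (⟨·, ha⟩), by rintro (h | h) <;> exact h.2⟩)
      fun a h h' => lt_asymm h.1 h'.1
  rw [inversions_eq_inversions_erase_add e hj, h₁, h₂]
  ring

end Combinatorics

lemma neg_one_pow_mul_self {R : Type*} [Monoid R] [HasDistribNeg R] (c : ℕ) :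
    (-1 : R) ^ c * (-1) ^ c = 1 := by
  rw [← pow_add, Even.neg_one_pow ⟨c, rfl⟩]

namespace Koszul

variable {A : Type*} [CommRing A] {M : Type*} [AddCommGroup M] [Module A M] {n : ℕ}

/-- Cochains of all degrees at once, as functions on all subsets of `Fin n`; `koszulMap` is the
restriction to the `homogeneous` ones. -/
def coboundary (x : Fin n → A) : (Finset (Fin n) → M) →ₗ[A] (Finset (Fin n) → M) where
  toFun F t := ∑ j ∈ t, ((-1 : A) ^ #(t.filter (· < j)) * x j) • F (t.erase j)
  map_add' F G := funext fun t => by simp [smul_add, sum_add_distrib]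
  map_smul' a F := funext fun t => by simp [smul_sum, smul_smul, mul_comm a]

lemma coboundary_apply (x : Fin n → A) (F : Finset (Fin n) → M) (t : Finset (Fin n)) :
    coboundary x F t = ∑ j ∈ t, ((-1 : A) ^ #(t.filter (· < j)) * x j) • F (t.erase j) :=
  rfl

variable (A M n) in
def homogeneous (k : ℤ) : Submodule A (Finset (Fin n) → M) where
  carrier := {F | ∀ s, (#s : ℤ) ≠ k → F s = 0}
  add_mem' hF hG s hs := by simp [hF s hs, hG s hs]
  zero_mem' _ _ := rfl
  smul_mem' a F hF s hs := by simp [hF s hs]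

lemma eq_zero_of_mem_homogeneous {k : ℤ} {F : Finset (Fin n) → M}
    (hF : F ∈ homogeneous A M n k) (hk : k < 0) : F = 0 :=
  funext fun s => hF s (by omega)

lemma coboundary_mem {k : ℤ} (x : Fin n → A) {F : Finset (Fin n) → M}
    (hF : F ∈ homogeneous A M n k) : coboundary x F ∈ homogeneous A M n (k + 1) := by
  intro t ht
  refine sum_eq_zero fun j hj => ?_
  rw [hF _ (by rw [card_erase_of_mem hj]; have := card_pos.2 ⟨j, hj⟩; omega), smul_zero]

/-- `H^k(Hom(K_•(x), M)) = 0`. Degrees are integers so that `k = 0` needs no special case: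
`homogeneous A M n (-1)` is zero. -/
def CohomologyVanishes (M : Type*) [AddCommGroup M] [Module A M] (x : Fin n → A) (k : ℤ) :
    Prop :=
  ∀ F ∈ homogeneous A M n k, coboundary x F = 0 →
    ∃ H ∈ homogeneous A M n (k - 1), coboundary x H = F

lemma cohomologyVanishes_of_neg (x : Fin n → A) {k : ℤ} (hk : k < 0) :
    CohomologyVanishes M x k := fun F hF _ =>
  ⟨0, zero_mem _, by rw [map_zero, eq_zero_of_mem_homogeneous hF hk]⟩

section Comparison

def extendByZero {i : ℕ} (g : {s : Finset (Fin n) // #s = i} → M) : Finset (Fin n) → M :=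
  fun s => if h : #s = i then g ⟨s, h⟩ else 0

lemma extendByZero_mem {i : ℕ} (g : {s : Finset (Fin n) // #s = i} → M) :
    extendByZero g ∈ homogeneous A M n i := fun _ hs =>
  dif_neg (by omega)

lemma extendByZero_restrict {i : ℕ} {F : Finset (Fin n) → M}
    (hF : F ∈ homogeneous A M n i) : extendByZero (fun s : {s // #s = i} => F s) = F := by
  funext s
  by_cases hs : #s = i
  · simp [extendByZero, hs]
  · simp [extendByZero, hs, hF s (by omega)]

lemma mem_homogeneous_iff_exists {i : ℕ} {F : Finset (Fin n) → M} :
    F ∈ homogeneous A M n i ↔ ∃ g : {s // #s = i} → M, extendByZero g = F :=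
  ⟨fun hF => ⟨_, extendByZero_restrict hF⟩, by rintro ⟨g, rfl⟩; exact extendByZero_mem g⟩

lemma extendByZero_injective {i : ℕ} :
    Function.Injective (extendByZero : ({s : Finset (Fin n) // #s = i} → M) → _) :=
  fun _ _ h => funext fun s => by simpa [extendByZero, s.2] using congrFun h s

lemma extendByZero_zero {i : ℕ} :
    extendByZero (0 : {s : Finset (Fin n) // #s = i} → M) = 0 :=
  funext fun s => by simp [extendByZero]

lemma koszulMap_apply (x : Fin n → A) {i : ℕ} (g : {s : Finset (Fin n) // #s = i} → M)
    (t : {s : Finset (Fin n) // #s = i + 1}) :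
    koszulMap A M x i g t = coboundary x (extendByZero g) t := by
  simp only [koszulMap, LinearMap.coe_mk, AddHom.coe_mk, coboundary_apply]
  rw [← sum_attach t.1]
  refine sum_congr rfl fun j _ => ?_
  rw [extendByZero, dif_pos]

lemma extendByZero_koszulMap (x : Fin n → A) {i : ℕ}
    (g : {s : Finset (Fin n) // #s = i} → M) :
    extendByZero (koszulMap A M x i g) = coboundary x (extendByZero g) := by
  rw [← extendByZero_restrict (coboundary_mem x (extendByZero_mem g))]
  exact congrArg extendByZero (funext (koszulMap_apply x g))

lemma koszulMap_eq_iff (x : Fin n → A) {i : ℕ} (g : {s // #s = i} → M)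
    (g' : {s // #s = i + 1} → M) :
    koszulMap A M x i g = g' ↔ coboundary x (extendByZero g) = extendByZero g' := by
  rw [← extendByZero_koszulMap, extendByZero_injective.eq_iff]

lemma koszulCohomologyNeZero_iff (x : Fin n → A) (k : ℕ) :
    koszulCohomologyNeZero A M x k ↔ ¬ CohomologyVanishes M x k := by
  rw [← not_iff_not, not_not]
  cases k with
  | zero =>
    rw [koszulCohomologyNeZero, not_not, LinearMap.ker_eq_bot']
    constructor
    · intro h F hF hDF
      obtain ⟨g, rfl⟩ := mem_homogeneous_iff_exists.1 hF
      rw [← extendByZero_zero, ← koszulMap_eq_iff] at hDF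
      exact ⟨0, zero_mem _, by rw [h g hDF, extendByZero_zero, map_zero]⟩
    · intro h g hg
      rw [koszulMap_eq_iff, extendByZero_zero] at hg
      obtain ⟨H, hH, hDH⟩ := h _ (extendByZero_mem g) hg
      rw [eq_zero_of_mem_homogeneous hH (by norm_num), map_zero, ← extendByZero_zero] at hDH
      exact extendByZero_injective hDH.symm
  | succ i =>
    rw [koszulCohomologyNeZero, not_not]
    constructor
    · intro h F hF hDF
      obtain ⟨g, rfl⟩ := mem_homogeneous_iff_exists.1 (by exact_mod_cast hF)
      rw [← extendByZero_zero, ← koszulMap_eq_iff] at hDF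
      obtain ⟨h', hh'⟩ := h hDF
      exact ⟨extendByZero h', by simpa using extendByZero_mem (A := A) h',
        (koszulMap_eq_iff x h' g).1 hh'⟩
    · intro h g hg
      rw [LinearMap.mem_ker, koszulMap_eq_iff, extendByZero_zero] at hg
      obtain ⟨H, hH, hDH⟩ := h _ (by exact_mod_cast extendByZero_mem g) hg
      obtain ⟨h', rfl⟩ := mem_homogeneous_iff_exists.1 (by simpa using hH)
      exact ⟨h', (koszulMap_eq_iff x h' g).2 hDH⟩

end Comparison

section Transfer

variable {A' : Type*} [CommRing A'] {M' : Type*} [AddCommGroup M'] [Module A' M'] {n' : ℕ}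

lemma cohomologyVanishes_iff_of_bijective {x : Fin n → A} {x' : Fin n' → A'}
    (Φ : (Finset (Fin n) → M) →+ (Finset (Fin n') → M')) (hΦ : Function.Bijective Φ)
    (hD : ∀ F, coboundary x' (Φ F) = Φ (coboundary x F))
    (hhom : ∀ (k : ℤ) F, Φ F ∈ homogeneous A' M' n' k ↔ F ∈ homogeneous A M n k) (k : ℤ) :
    CohomologyVanishes M' x' k ↔ CohomologyVanishes M x k := by
  constructor
  · intro h F hF hDF
    obtain ⟨H', hH', hDH'⟩ := h (Φ F) ((hhom k F).2 hF) (by rw [hD, hDF, map_zero])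
    obtain ⟨H, rfl⟩ := hΦ.2 H'
    exact ⟨H, (hhom _ H).1 hH', hΦ.1 (by rw [← hD, hDH'])⟩
  · intro h F' hF' hDF'
    obtain ⟨F, rfl⟩ := hΦ.2 F'
    obtain ⟨H, hH, rfl⟩ := h F ((hhom k F).1 hF') (hΦ.1 (by rw [← hD, hDF', map_zero]))
    exact ⟨Φ H, (hhom _ H).2 hH, hD H⟩

lemma coboundary_comp_semilinear {σ : A →+* A'} (L : M →ₛₗ[σ] M') (x : Fin n → A)
    (F : Finset (Fin n) → M) : coboundary (σ ∘ x) (L ∘ F) = L ∘ coboundary x F := by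
  funext t
  simp [coboundary_apply, map_sum, map_smulₛₗ]

lemma comp_mem_homogeneous {σ : A →+* A'} (L : M →ₛₗ[σ] M') {k : ℤ} {F : Finset (Fin n) → M}
    (hF : F ∈ homogeneous A M n k) : L ∘ F ∈ homogeneous A' M' n k := fun s hs => by
  simp [hF s hs]

lemma cohomologyVanishes_comp_semilinear_iff {σ : A →+* A'} (L : M →ₛₗ[σ] M')
    (hL : Function.Bijective L) (x : Fin n → A) (k : ℤ) :
    CohomologyVanishes M' (σ ∘ x) k ↔ CohomologyVanishes M x k :=
  cohomologyVanishes_iff_of_bijective (L.toAddMonoidHom.compLeft _)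
    ⟨hL.1.comp_left, hL.2.comp_left⟩ (coboundary_comp_semilinear L x)
    (fun _ _ => forall_congr' fun _ => imp_congr_right fun _ => map_eq_zero_iff L hL.1) k

end Transfer

section Prod

variable {N : Type*} [AddCommGroup N] [Module A N]

lemma coboundary_comp_linearMap (L : M →ₗ[A] N) (x : Fin n → A) (F : Finset (Fin n) → M) :
    coboundary x (L ∘ F) = L ∘ coboundary x F :=
  coboundary_comp_semilinear L x F

lemma CohomologyVanishes.of_retract (L : M →ₗ[A] N) (P : N →ₗ[A] M) (hPL : ∀ m, P (L m) = m)
    {x : Fin n → A} {k : ℤ} (h : CohomologyVanishes N x k) : CohomologyVanishes M x k := by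
  intro F hF hDF
  obtain ⟨H, hH, hDH⟩ := h (L ∘ F) (comp_mem_homogeneous L hF)
    (by rw [coboundary_comp_linearMap, hDF]; exact funext fun _ => map_zero L)
  refine ⟨P ∘ H, comp_mem_homogeneous P hH, ?_⟩
  rw [coboundary_comp_linearMap, hDH]
  exact funext fun s => hPL (F s)

lemma cohomologyVanishes_prod_iff (x : Fin n → A) (k : ℤ) :
    CohomologyVanishes (M × N) x k ↔ CohomologyVanishes M x k ∧ CohomologyVanishes N x k := by
  refine ⟨fun h => ⟨h.of_retract (LinearMap.inl A M N) (LinearMap.fst A M N) fun _ => rfl,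
    h.of_retract (LinearMap.inr A M N) (LinearMap.snd A M N) fun _ => rfl⟩, ?_⟩
  rintro ⟨hM, hN⟩ F hF hDF
  obtain ⟨H₁, hH₁, hDH₁⟩ := hM (LinearMap.fst A M N ∘ F) (comp_mem_homogeneous _ hF)
    (by rw [coboundary_comp_linearMap, hDF]; rfl)
  obtain ⟨H₂, hH₂, hDH₂⟩ := hN (LinearMap.snd A M N ∘ F) (comp_mem_homogeneous _ hF)
    (by rw [coboundary_comp_linearMap, hDF]; rfl)
  refine ⟨LinearMap.inl A M N ∘ H₁ + LinearMap.inr A M N ∘ H₂,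
    add_mem (comp_mem_homogeneous _ hH₁) (comp_mem_homogeneous _ hH₂), ?_⟩
  rw [map_add, coboundary_comp_linearMap, coboundary_comp_linearMap, hDH₁, hDH₂]
  exact funext fun s => Prod.ext (add_zero _) (zero_add _)

end Prod

section Cons

variable (A M n) in
def withoutZero : (Finset (Fin (n + 1)) → M) →ₗ[A] (Finset (Fin n) → M) :=
  LinearMap.funLeft A M (Finset.map (Fin.succEmb n))

variable (A M n) in
def withZero : (Finset (Fin (n + 1)) → M) →ₗ[A] (Finset (Fin n) → M) :=
  LinearMap.funLeft A M fun s => insert 0 (s.map (Fin.succEmb n))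

noncomputable def predFinset (t : Finset (Fin (n + 1))) : Finset (Fin n) :=
  t.preimage Fin.succ (Fin.succ_injective n).injOn

noncomputable def glue (g h : Finset (Fin n) → M) (t : Finset (Fin (n + 1))) : M :=
  if 0 ∈ t then h (predFinset t) else g (predFinset t)

lemma predFinset_map (s : Finset (Fin n)) : predFinset (s.map (Fin.succEmb n)) = s := by
  ext; simp [predFinset]

lemma predFinset_insert_zero_map (s : Finset (Fin n)) :
    predFinset (insert 0 (s.map (Fin.succEmb n))) = s := by
  ext; simp [predFinset, Fin.succ_ne_zero]

lemma map_predFinset (t : Finset (Fin (n + 1))) :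
    (predFinset t).map (Fin.succEmb n) = t.erase 0 := by
  ext j
  cases j using Fin.cases <;> simp [predFinset, Fin.succ_ne_zero]

@[simp] lemma withoutZero_glue (g h : Finset (Fin n) → M) :
    withoutZero A M n (glue g h) = g := by
  funext s; simp [withoutZero, LinearMap.funLeft_apply, glue, predFinset_map]

@[simp] lemma withZero_glue (g h : Finset (Fin n) → M) : withZero A M n (glue g h) = h := by
  funext s; simp [withZero, LinearMap.funLeft_apply, glue, predFinset_insert_zero_map]

lemma ext_withoutZero_withZero {F F' : Finset (Fin (n + 1)) → M}
    (h₁ : withoutZero A M n F = withoutZero A M n F')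
    (h₂ : withZero A M n F = withZero A M n F') : F = F' := by
  funext t
  by_cases h0 : 0 ∈ t
  · have ht : t = insert 0 ((predFinset t).map (Fin.succEmb n)) := by
      rw [map_predFinset, insert_erase h0]
    rw [ht]; exact congrFun h₂ _
  · have ht : t = (predFinset t).map (Fin.succEmb n) := by
      rw [map_predFinset, erase_eq_of_notMem h0]
    rw [ht]; exact congrFun h₁ _

lemma withoutZero_mem {k : ℤ} {F : Finset (Fin (n + 1)) → M}
    (hF : F ∈ homogeneous A M (n + 1) k) : withoutZero A M n F ∈ homogeneous A M n k :=
  fun _ hs => hF _ (by rwa [card_map])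

lemma withZero_mem {k : ℤ} {F : Finset (Fin (n + 1)) → M}
    (hF : F ∈ homogeneous A M (n + 1) k) : withZero A M n F ∈ homogeneous A M n (k - 1) :=
  fun _ hs => hF _ (by rw [card_insert_of_notMem (by simp [Fin.succ_ne_zero]), card_map]; omega)

lemma glue_mem {k : ℤ} {g h : Finset (Fin n) → M} (hg : g ∈ homogeneous A M n k)
    (hh : h ∈ homogeneous A M n (k - 1)) : glue g h ∈ homogeneous A M (n + 1) k := by
  intro t ht
  have hcard := congrArg Finset.card (map_predFinset t)
  rw [card_map] at hcard
  unfold glue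
  split_ifs with h0
  · exact hh _ (by rw [hcard, card_erase_of_mem h0]; have := card_pos.2 ⟨0, h0⟩; omega)
  · exact hg _ (by rwa [hcard, erase_eq_of_notMem h0])

variable (z : A) (x : Fin n → A)

lemma withoutZero_coboundary_cons (F : Finset (Fin (n + 1)) → M) :
    withoutZero A M n (coboundary (Fin.cons z x) F) = coboundary x (withoutZero A M n F) := by
  funext s
  simp [withoutZero, LinearMap.funLeft_apply, coboundary_apply, sum_map, filter_map, map_erase,
    Function.comp_def, Fin.succ_lt_succ_iff]

lemma withZero_coboundary_cons (F : Finset (Fin (n + 1)) → M) :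
    withZero A M n (coboundary (Fin.cons z x) F) =
      z • withoutZero A M n F - coboundary x (withZero A M n F) := by
  funext s
  have h0 : (0 : Fin (n + 1)) ∉ s.map (Fin.succEmb n) := by simp [Fin.succ_ne_zero]
  have herase (j : Fin n) : (insert 0 (s.map (Fin.succEmb n))).erase j.succ =
      insert 0 ((s.erase j).map (Fin.succEmb n)) := by
    rw [erase_insert_of_ne (Fin.succ_ne_zero j).symm, map_erase, Fin.coe_succEmb]
  simp [withoutZero, withZero, LinearMap.funLeft_apply, coboundary_apply, sum_insert h0, herase,
    sum_map, filter_map, filter_insert, Function.comp_def, Fin.succ_lt_succ_iff, Fin.succ_pos,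
    pow_succ, sub_eq_add_neg]

lemma CohomologyVanishes.cons {k : ℤ} (hk : CohomologyVanishes M x k)
    (hk' : CohomologyVanishes M x (k - 1)) : CohomologyVanishes M (Fin.cons z x) k := by
  intro G hG hDG
  obtain ⟨g, hg, hDg⟩ := hk (withoutZero A M n G) (withoutZero_mem hG)
    (by rw [← withoutZero_coboundary_cons, hDG, map_zero])
  have hcocycle : coboundary x (withZero A M n G - z • g) = 0 := by
    have := withZero_coboundary_cons z x G
    rw [hDG, map_zero, ← hDg, ← map_smul, eq_comm, sub_eq_zero] at this
    rw [map_sub, ← this, sub_self]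
  obtain ⟨h, hh, hDh⟩ := hk' _ (sub_mem (withZero_mem hG) (Submodule.smul_mem _ z hg)) hcocycle
  refine ⟨glue g (-h), glue_mem hg (neg_mem hh), ext_withoutZero_withZero (A := A) ?_ ?_⟩
  · rw [withoutZero_coboundary_cons, withoutZero_glue, hDg]
  · rw [withZero_coboundary_cons, withoutZero_glue, withZero_glue, map_neg, hDh]
    abel

end Cons

section Contraction

variable (A) in
def contract (m : Fin n) : (Finset (Fin n) → M) →ₗ[A] (Finset (Fin n) → M) where
  toFun F s := if m ∈ s then 0 else (-1 : A) ^ #(s.filter (· < m)) • F (insert m s)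
  map_add' F G := funext fun s => by by_cases hm : m ∈ s <;> simp [hm]
  map_smul' a F := funext fun s => by by_cases hm : m ∈ s <;> simp [hm, smul_comm a]

lemma contract_apply (m : Fin n) (F : Finset (Fin n) → M) (s : Finset (Fin n)) :
    contract A m F s = if m ∈ s then 0 else (-1 : A) ^ #(s.filter (· < m)) • F (insert m s) :=
  rfl

lemma contract_mem (m : Fin n) {k : ℤ} {F : Finset (Fin n) → M}
    (hF : F ∈ homogeneous A M n k) : contract A m F ∈ homogeneous A M n (k - 1) := by
  intro s hs
  rw [contract_apply]
  split_ifs with hm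
  · rfl
  · rw [hF _ (by rw [card_insert_of_notMem hm]; omega), smul_zero]

lemma coboundary_contract_add_contract_coboundary (x : Fin n → A) (m : Fin n)
    (F : Finset (Fin n) → M) :
    coboundary x (contract A m F) + contract A m (coboundary x F) = x m • F := by
  funext t
  simp only [Pi.add_apply, Pi.smul_apply, contract_apply, coboundary_apply]
  by_cases hm : m ∈ t
  · rw [if_pos hm, add_zero, sum_eq_single_of_mem m hm fun j _ hj => by
      rw [if_pos (mem_erase.2 ⟨Ne.symm hj, hm⟩), smul_zero]]
    have hmf : m ∉ t.filter (· < m) := fun h => lt_irrefl m (mem_filter.1 h).2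
    rw [if_neg (notMem_erase m t), insert_erase hm, filter_erase, erase_eq_of_notMem hmf,
      smul_smul, mul_right_comm, neg_one_pow_mul_self, one_mul]
  · rw [if_neg hm, sum_insert hm, filter_insert, if_neg (lt_irrefl m), erase_insert hm, smul_add,
      smul_smul, ← mul_assoc, neg_one_pow_mul_self, one_mul, smul_sum, add_left_comm,
      ← sum_add_distrib, sum_eq_zero, add_zero]
    intro j hj
    rw [if_neg fun h => hm (mem_of_mem_erase h),
      erase_insert_of_ne (ne_of_mem_of_not_mem hj hm).symm, smul_smul, smul_smul, ← add_smul]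
    have hsign : (-1 : A) ^ #(t.filter (· < m)) * (-1) ^ #((insert m t).filter (· < j)) =
        -((-1) ^ #(t.filter (· < j)) * (-1) ^ #((t.erase j).filter (· < m))) := by
      rw [← pow_add, ← pow_add, ← card_filter_lt_erase_add_one hm hj, pow_succ, mul_neg_one]
    rw [show ((-1 : A) ^ #(t.filter (· < j)) * x j * (-1) ^ #((t.erase j).filter (· < m)) +
        (-1) ^ #(t.filter (· < m)) * ((-1) ^ #((insert m t).filter (· < j)) * x j)) = 0 by
      linear_combination x j * hsign, zero_smul]

lemma exists_coboundary_eq_smul {x : Fin n → A} {z : A} (hz : z ∈ Ideal.span (Set.range x))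
    {k : ℤ} {F : Finset (Fin n) → M} (hF : F ∈ homogeneous A M n k) (hDF : coboundary x F = 0) :
    ∃ W ∈ homogeneous A M n (k - 1), coboundary x W = z • F := by
  obtain ⟨c, rfl⟩ := (Submodule.mem_span_range_iff_exists_fun A).1 hz
  refine ⟨∑ m, c m • contract A m F,
    sum_mem fun m _ => Submodule.smul_mem _ _ (contract_mem m hF), ?_⟩
  have hcontract (m : Fin n) : coboundary x (contract A m F) = x m • F := by
    simpa [hDF] using coboundary_contract_add_contract_coboundary x m F
  simp [map_sum, hcontract, sum_smul, smul_smul]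

lemma CohomologyVanishes.of_cons {x : Fin n → A} {z : A} (hz : z ∈ Ideal.span (Set.range x))
    {k : ℤ} (h : CohomologyVanishes M (Fin.cons z x) k) : CohomologyVanishes M x k := by
  intro F hF hDF
  obtain ⟨W, hW, hDW⟩ := exists_coboundary_eq_smul hz hF hDF
  obtain ⟨H, hH, hDH⟩ := h (glue F W) (glue_mem hF hW) <| ext_withoutZero_withZero (A := A)
    (by rw [withoutZero_coboundary_cons, withoutZero_glue, hDF, map_zero])
    (by rw [withZero_coboundary_cons, withoutZero_glue, withZero_glue, hDW, sub_self, map_zero])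
  exact ⟨withoutZero A M n H, withoutZero_mem hH, by
    rw [← withoutZero_coboundary_cons z, hDH, withoutZero_glue]⟩

end Contraction

section Permutation

variable {n' : ℕ}

variable (A) in
/-- The sign `(-1) ^ inversions e s` is the sign of the reordering of `s` by `e`, which makes
`permute` a cochain map. -/
def permute (e : Fin n ≃ Fin n') : (Finset (Fin n') → M) →ₗ[A] (Finset (Fin n) → M) where
  toFun F s := (-1 : A) ^ inversions e s • F (e.finsetCongr s)
  map_add' _ _ := funext fun _ => smul_add ..
  map_smul' _ _ := funext fun _ => smul_comm ..

lemma permute_apply (e : Fin n ≃ Fin n') (F : Finset (Fin n') → M) (s : Finset (Fin n)) :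
    permute A e F s = (-1 : A) ^ inversions e s • F (e.finsetCongr s) :=
  rfl

lemma coboundary_permute (e : Fin n ≃ Fin n') (x : Fin n' → A) (F : Finset (Fin n') → M) :
    coboundary (x ∘ e) (permute A e F) = permute A e (coboundary x F) := by
  funext t
  simp only [coboundary_apply, permute_apply, Equiv.finsetCongr_apply, sum_map, smul_sum,
    smul_smul, filter_map, card_map, Function.comp_apply, Equiv.coe_toEmbedding]
  refine sum_congr rfl fun j hj => ?_
  rw [show (t.map e.toEmbedding).erase (e j) = (t.erase j).map e.toEmbedding from
    (map_erase e.toEmbedding t j).symm]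
  congr 1
  have hsign : (-1 : A) ^ inversions e t * (-1) ^ #(t.filter fun a => e a < e j) =
      (-1) ^ inversions e (t.erase j) * (-1) ^ #(t.filter (· < j)) := by
    rw [← pow_add, ← pow_add, inversions_add_card_filter e hj, pow_add _ _ (2 * _), pow_mul,
      neg_one_sq, one_pow, mul_one]
  linear_combination x (e j) * hsign.symm

lemma permute_bijective (e : Fin n ≃ Fin n') :
    Function.Bijective (permute A e : (Finset (Fin n') → M) → (Finset (Fin n) → M)) := by
  refine Function.bijective_iff_has_inverse.2 ⟨fun G t => (-1 : A) ^
    inversions e (e.finsetCongr.symm t) • G (e.finsetCongr.symm t), fun F => ?_, fun G => ?_⟩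
  · funext t
    simp only [permute_apply, smul_smul, neg_one_pow_mul_self, one_smul, Equiv.apply_symm_apply]
  · funext s
    simp only [permute_apply, smul_smul, neg_one_pow_mul_self, one_smul, Equiv.symm_apply_apply]

lemma permute_mem_homogeneous_iff (e : Fin n ≃ Fin n') {k : ℤ} {F : Finset (Fin n') → M} :
    permute A e F ∈ homogeneous A M n k ↔ F ∈ homogeneous A M n' k := by
  have hunit (s : Finset (Fin n)) : IsUnit ((-1 : A) ^ inversions e s) := isUnit_neg_one.pow _
  refine ⟨fun h t ht => ?_, fun h s hs => ?_⟩
  · have := h (e.finsetCongr.symm t)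
      (by rwa [Equiv.finsetCongr_symm, Equiv.finsetCongr_apply, card_map])
    rwa [permute_apply, (hunit _).smul_eq_zero, Equiv.apply_symm_apply] at this
  · rw [permute_apply, h _ (by rwa [Equiv.finsetCongr_apply, card_map]), smul_zero]

lemma cohomologyVanishes_comp_equiv_iff (e : Fin n ≃ Fin n') (x : Fin n' → A) (k : ℤ) :
    CohomologyVanishes M (x ∘ e) k ↔ CohomologyVanishes M x k :=
  cohomologyVanishes_iff_of_bijective (permute A e).toAddMonoidHom (permute_bijective e)
    (coboundary_permute e x) (fun _ _ => permute_mem_homogeneous_iff e) k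

end Permutation

end Koszul

open Koszul

section kgrSeq

variable {A : Type*} [CommRing A] {M : Type*} [AddCommGroup M] [Module A M] {m n n' : ℕ}

lemma kgrSeq_eq_sInf (x : Fin n → A) :
    kgrSeq A M x = sInf ((↑) '' {k : ℕ | ¬ CohomologyVanishes M x k}) := by
  simp only [kgrSeq, koszulCohomologyNeZero_iff]
  congr 1
  ext i
  constructor
  · rintro ⟨k, rfl, hk⟩; exact ⟨k, hk, rfl⟩
  · rintro ⟨k, hk, rfl⟩; exact ⟨k, rfl, hk⟩

lemma kgrSeq_le_kgrSeq_of_cohomologyVanishes {A' : Type*} [CommRing A'] {M' : Type*}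
    [AddCommGroup M'] [Module A' M'] {x : Fin n → A} {x' : Fin n' → A'}
    (h : ∀ k : ℕ, (∀ j : ℤ, j ≤ k → CohomologyVanishes M x j) → CohomologyVanishes M' x' k) :
    kgrSeq A M x ≤ kgrSeq A' M' x' := by
  rw [kgrSeq_eq_sInf, kgrSeq_eq_sInf]
  refine le_sInf ?_
  rintro _ ⟨k, hk, rfl⟩
  obtain ⟨j, hjk, hj⟩ : ∃ j : ℤ, j ≤ k ∧ ¬ CohomologyVanishes M x j := by
    by_contra! H
    exact hk (h k H)
  lift j to ℕ using not_lt.1 fun hneg => hj (cohomologyVanishes_of_neg x hneg)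
  exact sInf_le_of_le ⟨j, hj, rfl⟩ (by exact_mod_cast hjk)

lemma kgrSeq_congr {A' : Type*} [CommRing A'] {M' : Type*} [AddCommGroup M'] [Module A' M']
    {x : Fin n → A} {x' : Fin n' → A'}
    (h : ∀ k : ℕ, CohomologyVanishes M x k ↔ CohomologyVanishes M' x' k) :
    kgrSeq A M x = kgrSeq A' M' x' := by
  simp only [kgrSeq_eq_sInf, h]

lemma kgrSeq_le_kgr {𝔞 : Ideal A} {x : Fin n → A} (hx : ∀ j, x j ∈ 𝔞) :
    kgrSeq A M x ≤ kgr A 𝔞 M :=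
  le_iSup_of_le n (le_iSup_of_le x (le_iSup_of_le hx le_rfl))

lemma kgrSeq_prod {N : Type*} [AddCommGroup N] [Module A N] (x : Fin n → A) :
    kgrSeq A (M × N) x = min (kgrSeq A M x) (kgrSeq A N x) := by
  simp only [kgrSeq_eq_sInf, cohomologyVanishes_prod_iff, not_and_or, Set.ofPred_or,
    Set.image_union, sInf_union]

lemma kgrSeq_comp_semilinear {A' : Type*} [CommRing A'] {M' : Type*} [AddCommGroup M']
    [Module A' M'] {σ : A →+* A'} (L : M →ₛₗ[σ] M') (hL : Function.Bijective L) (x : Fin n → A) :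
    kgrSeq A' M' (σ ∘ x) = kgrSeq A M x :=
  kgrSeq_congr fun k => cohomologyVanishes_comp_semilinear_iff L hL x k

lemma kgrSeq_comp_equiv (x : Fin n' → A) (e : Fin n ≃ Fin n') :
    kgrSeq A M (x ∘ e) = kgrSeq A M x :=
  kgrSeq_congr fun k => cohomologyVanishes_comp_equiv_iff e x k

lemma kgrSeq_comp_cast (x : Fin n' → A) (h : n = n') :
    kgrSeq A M (x ∘ Fin.cast h) = kgrSeq A M x :=
  kgrSeq_comp_equiv x (finCongr h)

lemma kgrSeq_le_kgrSeq_cons (z : A) (x : Fin n → A) :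
    kgrSeq A M x ≤ kgrSeq A M (Fin.cons z x) :=
  kgrSeq_le_kgrSeq_of_cohomologyVanishes fun k h => (h k le_rfl).cons z x (h _ (by omega))

lemma kgrSeq_cons_le {z : A} {x : Fin n → A} (hz : z ∈ Ideal.span (Set.range x)) :
    kgrSeq A M (Fin.cons z x) ≤ kgrSeq A M x :=
  kgrSeq_le_kgrSeq_of_cohomologyVanishes fun k h => (h k le_rfl).of_cons hz

lemma kgrSeq_le_kgrSeq_append (u : Fin m → A) (y : Fin n → A) :
    kgrSeq A M y ≤ kgrSeq A M (Fin.append u y) := by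
  induction m with
  | zero => rw [Fin.append_left_nil u y rfl, kgrSeq_comp_cast]
  | succ m ih =>
    rw [← Fin.cons_self_tail u, Fin.append_cons, kgrSeq_comp_cast]
    exact (ih _).trans (kgrSeq_le_kgrSeq_cons _ _)

lemma kgrSeq_append_le {y : Fin m → A} {u : Fin n → A}
    (hy : ∀ i, y i ∈ Ideal.span (Set.range u)) : kgrSeq A M (Fin.append y u) ≤ kgrSeq A M u := by
  induction m with
  | zero => rw [Fin.append_left_nil y u rfl, kgrSeq_comp_cast]
  | succ m ih =>
    rw [← Fin.cons_self_tail y, Fin.append_cons, kgrSeq_comp_cast]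
    have hrange : Set.range u ⊆ Set.range (Fin.append (Fin.tail y) u) :=
      Set.range_subset_iff.2 fun i => ⟨Fin.natAdd m i, Fin.append_right _ _ i⟩
    exact (kgrSeq_cons_le (Ideal.span_mono hrange (hy 0))).trans (ih fun i => hy i.succ)

lemma Fin.append_eq_append_comp_finAddFlip {α : Type*} (u : Fin m → α) (y : Fin n → α) :
    Fin.append u y = Fin.append y u ∘ finAddFlip := by
  funext i
  induction i using Fin.addCases <;> simp

lemma kgrSeq_le_kgrSeq_of_forall_mem_span {y : Fin m → A} {u : Fin n → A}
    (hy : ∀ i, y i ∈ Ideal.span (Set.range u)) : kgrSeq A M y ≤ kgrSeq A M u :=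
  calc kgrSeq A M y ≤ kgrSeq A M (Fin.append u y) := kgrSeq_le_kgrSeq_append u y
    _ = kgrSeq A M (Fin.append y u) := by
      rw [Fin.append_eq_append_comp_finAddFlip, kgrSeq_comp_equiv]
    _ ≤ kgrSeq A M u := kgrSeq_append_le hy

end kgrSeq

lemma Ideal.exists_fin_forall_mem_span_of_mem_map {A R : Type*} [CommRing A] [CommRing R]
    (φ : A →+* R) {𝔞 : Ideal A} {m : ℕ} {y : Fin m → R} (hy : ∀ i, y i ∈ 𝔞.map φ) :
    ∃ (n : ℕ) (a : Fin n → A), (∀ j, a j ∈ 𝔞) ∧ ∀ i, y i ∈ Ideal.span (Set.range (φ ∘ a)) := by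
  classical
  choose T hT hyT using fun i => Submodule.mem_span_finite_of_mem_span (hy i)
  obtain ⟨S, hS𝔞, hST⟩ := Finset.subset_set_image_iff.1
    (show ↑(Finset.univ.biUnion T) ⊆ φ '' 𝔞 by simpa using hT)
  obtain ⟨n, a, -, ha⟩ := S.finite_toSet.fin_param
  refine ⟨n, a, fun j => hS𝔞 (ha ▸ ⟨j, rfl⟩), fun i => ?_⟩
  rw [Set.range_comp, ha, ← Finset.coe_image, hST]
  exact Ideal.span_mono (Finset.coe_subset.2 (Finset.subset_biUnion_of_mem T (Finset.mem_univ i)))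
    (hyT i)

section Amalgamation

variable {A B : Type*} [CommRing A] [CommRing B]

def prodToAmalgamation (f : A →+* B) (J : Ideal B) :
    letI : Module A J := Module.compHom J f
    A × J →ₛₗ[amalgIota f J] amalgamation f J :=
  letI : Module A J := Module.compHom J f
  { toFun p := ⟨(p.1, f p.1 + p.2), by simp [amalgamation]⟩
    map_add' p q := by ext <;> simp [add_add_add_comm]
    map_smul' c p := Subtype.ext <| Prod.ext rfl <| by
      show f (c * p.1) + f c * p.2 = f c * (f p.1 + p.2)
      rw [map_mul, mul_add] }

lemma prodToAmalgamation_bijective (f : A →+* B) (J : Ideal B) :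
    letI : Module A J := Module.compHom J f
    Function.Bijective (prodToAmalgamation f J) := by
  let _ : Module A J := Module.compHom J f
  refine ⟨fun p q h => ?_, fun r => ⟨(r.1.1, ⟨r.1.2 - f r.1.1, r.2⟩), by
    ext <;> simp [prodToAmalgamation]⟩⟩
  have h₁ : p.1 = q.1 := congrArg (fun r : amalgamation f J => r.1.1) h
  have h₂ : f p.1 + p.2 = f q.1 + q.2 := congrArg (fun r : amalgamation f J => r.1.2) h
  rw [h₁, add_right_inj] at h₂
  exact Prod.ext h₁ (Subtype.ext h₂)

end Amalgamation

/-- For every ideal `𝔞` of `A`,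
`kgr_{A⋈^f J}(𝔞^e, A⋈^f J) ≤ min { kgr_A(𝔞, A), kgr_A(𝔞, J) }`. -/
theorem kgr_ext_le_min {A B : Type*} [CommRing A] [CommRing B] (f : A →+* B)
    (J : Ideal B) (𝔞 : Ideal A) :
    kgr ↥(amalgamation f J) (idealExt f J 𝔞) ↥(amalgamation f J) ≤
      min (kgr A 𝔞 A) (kgrIdeal f J 𝔞) := by
  let _ : Module A J := Module.compHom J f
  refine iSup_le fun m => iSup₂_le fun y hy => ?_
  obtain ⟨n, a, ha, hya⟩ := Ideal.exists_fin_forall_mem_span_of_mem_map (amalgIota f J) hy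
  calc kgrSeq _ _ y ≤ kgrSeq _ _ (amalgIota f J ∘ a) := kgrSeq_le_kgrSeq_of_forall_mem_span hya
    _ = kgrSeq A (A × J) a :=
      kgrSeq_comp_semilinear (prodToAmalgamation f J) (prodToAmalgamation_bijective f J) a
    _ = min (kgrSeq A A a) (kgrSeq A J a) := kgrSeq_prod a
    _ ≤ min (kgr A 𝔞 A) (kgrIdeal f J 𝔞) := min_le_min (kgrSeq_le_kgr ha) (kgrSeq_le_kgr ha)
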